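/- Let κ be a finite field with q elements. Suppose α is a multiplicative character with δ(α)=δ(ᾱγ)=0, i.e., α ≠ ε and α ≠ γ. Then for any multiplicative character ν, the finite-field Vandermonde formula holds: ₂F₁(α, ν̄; γ; 1) = (ᾱγ)_ν / (γ)°_ν. -/

import Mathlib

set_option linter.unusedSectionVars false
set_option maxHeartbeats 1000000


open scoped BigOperators

namespace KdF

variable {κ : Type*} [Field κ] [Fintype κ] [DecidableEq κ]

noncomputable instance : Fintype (MulChar κ ℂ) := Fintype.ofFinite _

/-- The Gauss sum `g(φ) = -∑ φ(x) ψ(x)`. -/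
noncomputable def g (ψ : AddChar κ ℂ) (φ : MulChar κ ℂ) : ℂ :=
  -∑ x : κ, φ x * ψ x

/-- The variant `g°(φ) = q^{δ(φ)} g(φ)`. -/
noncomputable def gc (ψ : AddChar κ ℂ) (φ : MulChar κ ℂ) : ℂ :=
  (if φ = 1 then (Fintype.card κ : ℂ) else 1) * g ψ φ

/-- Finite-field Pochhammer symbol `(α)_ν = g(αν)/g(α)`. -/
noncomputable def poch (ψ : AddChar κ ℂ) (α ν : MulChar κ ℂ) : ℂ :=
  g ψ (α * ν) / g ψ α

/-- Variant Pochhammer symbol `(α)°_ν = g°(αν)/g°(α)`. -/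
noncomputable def pochc (ψ : AddChar κ ℂ) (α ν : MulChar κ ℂ) : ℂ :=
  gc ψ (α * ν) / gc ψ α

/-- `₁F₀(μ; x)` over the finite field `κ`. -/
noncomputable def F10 (ψ : AddChar κ ℂ) (μ : MulChar κ ℂ) (x : κ) : ℂ :=
  (1 / (1 - (Fintype.card κ : ℂ))) *
    ∑ ν : MulChar κ ℂ, poch ψ μ ν / pochc ψ 1 ν * ν x

/-- `₂F₁(α, β; γ; x)` over the finite field `κ`. -/
noncomputable def F21 (ψ : AddChar κ ℂ) (α β γ : MulChar κ ℂ) (x : κ) : ℂ :=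
  (1 / (1 - (Fintype.card κ : ℂ))) *
    ∑ ν : MulChar κ ℂ,
      poch ψ α ν * poch ψ β ν / (pochc ψ γ ν * pochc ψ 1 ν) * ν x

/-- `₃F₂(α, β, γ; φ, ρ; x)` over the finite field `κ`. -/
noncomputable def F32 (ψ : AddChar κ ℂ) (α β γ φ ρ : MulChar κ ℂ) (x : κ) : ℂ :=
  (1 / (1 - (Fintype.card κ : ℂ))) *
    ∑ ν : MulChar κ ℂ,
      poch ψ α ν * poch ψ β ν * poch ψ γ ν /
        (pochc ψ φ ν * pochc ψ ρ ν * pochc ψ 1 ν) * ν x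

end KdF

open KdF

namespace VdM

variable {κ : Type*} [Field κ] [Fintype κ] [DecidableEq κ]

lemma qne : (Fintype.card κ : ℂ) ≠ 0 := by
  exact_mod_cast Fintype.card_pos.ne'

lemma G1 (ψ : AddChar κ ℂ) (hψ : ψ ≠ 1) : gaussSum (1 : MulChar κ ℂ) ψ = -1 := by
  have h : ∀ x : κ, (1 : MulChar κ ℂ) x * ψ x = ψ x - if x = 0 then 1 else 0 := by
    intro x
    rcases eq_or_ne x 0 with rfl | hx
    · simp [MulChar.map_zero]
    · simp [MulChar.one_apply (isUnit_iff_ne_zero.mpr hx), hx]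
  rw [gaussSum]
  simp only [h]
  rw [Finset.sum_sub_distrib, AddChar.sum_eq_zero_of_ne_one hψ, Finset.sum_ite_eq']
  simp

lemma sign_sq (χ : MulChar κ ℂ) : χ (-1 : κ) * χ (-1) = 1 := by
  rw [← map_mul, neg_mul_neg, one_mul, map_one]

/-- `G°`: the Gauss sum, corrected by a factor `q` on the trivial character. -/
noncomputable def Gc (ψ : AddChar κ ℂ) (χ : MulChar κ ℂ) : ℂ :=
  (if χ = 1 then (Fintype.card κ : ℂ) else 1) * gaussSum χ ψ

lemma inv_neg_one (χ : MulChar κ ℂ) : χ⁻¹ (-1 : κ) = χ (-1) := by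
  rw [MulChar.inv_apply']
  norm_num

lemma L3 (ψ : AddChar κ ℂ) (hψ : ψ ≠ 1) (χ : MulChar κ ℂ) :
    Gc ψ χ * gaussSum χ⁻¹ ψ = χ (-1 : κ) * (Fintype.card κ : ℂ) := by
  rcases eq_or_ne χ 1 with rfl | hχ
  · rw [Gc, if_pos rfl, inv_one, G1 ψ hψ, MulChar.one_apply (by norm_num : IsUnit (-1 : κ))]
    ring
  · rw [Gc, if_neg hχ, one_mul, ← mul_gaussSum_inv_eq_gaussSum χ⁻¹ ψ, inv_neg_one,
      mul_comm (χ (-1))]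
    rw [← mul_assoc, gaussSum_mul_gaussSum_eq_card hχ (AddChar.IsPrimitive.of_ne_one hψ)]
    ring

lemma sign_ne (χ : MulChar κ ℂ) : χ (-1 : κ) ≠ 0 :=
  fun h => one_ne_zero (by rw [← sign_sq χ, h, zero_mul])

lemma gauss_ne (ψ : AddChar κ ℂ) (hψ : ψ ≠ 1) (χ : MulChar κ ℂ) : gaussSum χ ψ ≠ 0 := by
  intro h
  have := L3 ψ hψ χ⁻¹
  rw [inv_inv, h, mul_zero] at this
  exact mul_ne_zero (sign_ne χ⁻¹) qne this.symm

lemma Gc_ne (ψ : AddChar κ ℂ) (hψ : ψ ≠ 1) (χ : MulChar κ ℂ) : Gc ψ χ ≠ 0 := by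
  rw [Gc]
  exact mul_ne_zero (by split <;> simp [qne]) (gauss_ne ψ hψ χ)

lemma Gc_one (ψ : AddChar κ ℂ) (hψ : ψ ≠ 1) :
    Gc ψ (1 : MulChar κ ℂ) = -(Fintype.card κ : ℂ) := by
  rw [Gc, if_pos rfl, G1 ψ hψ, mul_neg_one]

lemma Gc_of_ne (ψ : AddChar κ ℂ) {χ : MulChar κ ℂ} (hχ : χ ≠ 1) :
    Gc ψ χ = gaussSum χ ψ := by
  rw [Gc, if_neg hχ, one_mul]

lemma L5 (ψ : AddChar κ ℂ) (hψ : ψ ≠ 1) {A B : MulChar κ ℂ} (h : ¬(A = 1 ∧ B = 1)) :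
    gaussSum A ψ * gaussSum B ψ = jacobiSum A B * Gc ψ (A * B) := by
  rcases eq_or_ne (A * B) 1 with hAB | hAB
  · have hA : A ≠ 1 := by rintro rfl; exact h ⟨rfl, by simpa using hAB⟩
    have hB : B = A⁻¹ := by rw [eq_inv_iff_mul_eq_one, mul_comm]; exact hAB
    subst hB
    rw [hAB, Gc, if_pos rfl, jacobiSum_nontrivial_inv hA, G1 ψ hψ]
    have := L3 ψ hψ A
    rw [Gc, if_neg hA, one_mul] at this
    rw [this]; ring
  · rw [Gc, if_neg hAB, one_mul, ← jacobiSum_mul_nontrivial hAB ψ]; ring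

lemma orth (t : κ) :
    ∑ μ : MulChar κ ℂ, μ t = if t = 1 then ((Fintype.card κ : ℂ) - 1) else 0 := by
  haveI : NeZero ((Monoid.exponent κˣ : ℕ) : ℂ) :=
    ⟨Nat.cast_ne_zero.mpr Monoid.exponent_ne_zero_of_finite⟩
  split_ifs with ht
  · subst ht
    simp only [map_one, Finset.sum_const, Finset.card_univ, nsmul_eq_mul, mul_one]
    have h1 : Fintype.card (MulChar κ ℂ) = Fintype.card κˣ := by
      rw [← Nat.card_eq_fintype_card, ← Nat.card_eq_fintype_card,
        MulChar.card_eq_card_units_of_hasEnoughRootsOfUnity κ ℂ]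
    rw [h1, Fintype.card_units, Nat.cast_sub Fintype.card_pos, Nat.cast_one]
  · by_cases hu : IsUnit t
    · obtain ⟨χ, hχ⟩ := MulChar.exists_apply_ne_one_of_hasEnoughRootsOfUnity κ ℂ ht
      refine eq_zero_of_mul_eq_self_left hχ ?_
      rw [Finset.mul_sum]
      simp only [← MulChar.mul_apply]
      exact Fintype.sum_bijective _ (Group.mulLeft_bijective χ) _ _ fun χ' ↦ rfl
    · simp [MulChar.map_nonunit _ hu]

lemma point (A B C : MulChar κ ℂ) (x y : κ) :
    (A x * C⁻¹ (1 - x) * B y) *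
      (if x * (1 - x)⁻¹ * (y * (1 - y)⁻¹) = 1 then ((Fintype.card κ : ℂ) - 1) else 0)
    = if y = 1 - x then A x * (C⁻¹ * B) (1 - x) * ((Fintype.card κ : ℂ) - 1) else 0 := by
  by_cases hx0 : x = 0
  · subst hx0; simp [MulChar.map_zero]
  by_cases hx1 : x = 1
  · subst hx1; simp [MulChar.map_zero]
  have hx0' : (1 : κ) - x ≠ 0 := sub_ne_zero.mpr (Ne.symm hx1)
  by_cases hy : y = 1 - x
  · subst hy
    have hc : x * (1 - x)⁻¹ * ((1 - x) * (1 - (1 - x))⁻¹) = 1 := by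
      field_simp
      rw [sub_sub_cancel]; exact div_self hx0
    rw [if_pos hc, if_pos rfl, MulChar.mul_apply]
    ring
  · have hc : ¬(x * (1 - x)⁻¹ * (y * (1 - y)⁻¹) = 1) := by
      intro h
      apply hy
      by_cases hy0 : y = 0
      · subst hy0; simp [hx0, hx0'] at h
      by_cases hy1 : y = 1
      · subst hy1; simp [hx0, hx0'] at h
      have hy1' : (1 : κ) - y ≠ 0 := sub_ne_zero.mpr (Ne.symm hy1)
      field_simp at h
      linear_combination h
    rw [if_neg hc, if_neg hy, mul_zero]

lemma Wsum (A B C : MulChar κ ℂ) :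
    ∑ μ : MulChar κ ℂ, jacobiSum (A * μ) ((C * μ)⁻¹) * jacobiSum (B * μ) μ⁻¹
    = ((Fintype.card κ : ℂ) - 1) * jacobiSum A (C⁻¹ * B) := by
  have step1 : ∀ μ : MulChar κ ℂ,
      jacobiSum (A * μ) ((C * μ)⁻¹) * jacobiSum (B * μ) μ⁻¹
      = ∑ x : κ, ∑ y : κ, (A x * C⁻¹ (1 - x) * B y) *
          μ (x * (1 - x)⁻¹ * (y * (1 - y)⁻¹)) := by
    intro μ
    rw [jacobiSum, jacobiSum, Finset.sum_mul_sum]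
    refine Finset.sum_congr rfl fun x _ => Finset.sum_congr rfl fun y _ => ?_
    simp only [MulChar.mul_apply, mul_inv, MulChar.inv_apply', map_mul]
    ring
  calc ∑ μ : MulChar κ ℂ, jacobiSum (A * μ) ((C * μ)⁻¹) * jacobiSum (B * μ) μ⁻¹
      = ∑ μ : MulChar κ ℂ, ∑ x : κ, ∑ y : κ, (A x * C⁻¹ (1 - x) * B y) *
          μ (x * (1 - x)⁻¹ * (y * (1 - y)⁻¹)) := Finset.sum_congr rfl fun μ _ => step1 μ
    _ = ∑ x : κ, ∑ y : κ, (A x * C⁻¹ (1 - x) * B y) *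
          ∑ μ : MulChar κ ℂ, μ (x * (1 - x)⁻¹ * (y * (1 - y)⁻¹)) := by
        rw [Finset.sum_comm]
        refine Finset.sum_congr rfl fun x _ => ?_
        rw [Finset.sum_comm]
        exact Finset.sum_congr rfl fun y _ => (Finset.mul_sum _ _ _).symm
    _ = ∑ x : κ, ∑ y : κ, (if y = 1 - x then
          A x * (C⁻¹ * B) (1 - x) * ((Fintype.card κ : ℂ) - 1) else 0) := by
        refine Finset.sum_congr rfl fun x _ => Finset.sum_congr rfl fun y _ => ?_
        rw [orth, point]
    _ = ∑ x : κ, A x * (C⁻¹ * B) (1 - x) * ((Fintype.card κ : ℂ) - 1) := by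
        refine Finset.sum_congr rfl fun x _ => ?_
        rw [Finset.sum_ite_eq' Finset.univ (1 - x)
          (fun _ => A x * (C⁻¹ * B) (1 - x) * ((Fintype.card κ : ℂ) - 1)),
          if_pos (Finset.mem_univ _)]
    _ = ((Fintype.card κ : ℂ) - 1) * jacobiSum A (C⁻¹ * B) := by
        rw [jacobiSum, Finset.mul_sum]
        exact Finset.sum_congr rfl fun x _ => by ring

lemma collapse {q : ℂ} (hq1 : 1 - q ≠ 0) (c d : ℂ) :
    1 / (1 - q) * (c * ((q - 1) * d)) = -(c * d) := by
  field_simp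
  ring

lemma g_eq (ψ : AddChar κ ℂ) (φ : MulChar κ ℂ) : g ψ φ = -gaussSum φ ψ := rfl

lemma gc_eq (ψ : AddChar κ ℂ) (φ : MulChar κ ℂ) : gc ψ φ = -Gc ψ φ := by
  rw [KdF.gc, Gc, g_eq]; ring

lemma poch_eq (ψ : AddChar κ ℂ) (a b : MulChar κ ℂ) :
    poch ψ a b = gaussSum (a * b) ψ / gaussSum a ψ := by
  rw [poch, g_eq, g_eq, neg_div_neg_eq]

lemma pochc_eq (ψ : AddChar κ ℂ) (a b : MulChar κ ℂ) :
    pochc ψ a b = Gc ψ (a * b) / Gc ψ a := by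
  rw [pochc, gc_eq, gc_eq, neg_div_neg_eq]


lemma termwise (ψ : AddChar κ ℂ) (hψ : ψ ≠ 1) (α β γ μ : MulChar κ ℂ)
    (hαγ : α * γ⁻¹ ≠ 1) (h1 : ¬(β = 1 ∧ μ = 1)) :
    poch ψ α μ * poch ψ β μ / (pochc ψ γ μ * pochc ψ 1 μ)
    = γ (-1 : κ) * Gc ψ (α * γ⁻¹) * Gc ψ β * Gc ψ γ * Gc ψ 1 /
        ((Fintype.card κ : ℂ) ^ 2 * gaussSum α ψ * gaussSum β ψ) *
      (jacobiSum (α * μ) ((γ * μ)⁻¹) * jacobiSum (β * μ) μ⁻¹) := by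
  have e1 : (α * μ) * (γ * μ)⁻¹ = α * γ⁻¹ := by
    rw [mul_inv, mul_mul_mul_comm, mul_inv_cancel, mul_one]
  have R1 : gaussSum (α * μ) ψ * gaussSum ((γ * μ)⁻¹) ψ
      = jacobiSum (α * μ) ((γ * μ)⁻¹) * Gc ψ (α * γ⁻¹) := by
    have h := L5 ψ hψ (A := α * μ) (B := (γ * μ)⁻¹)
      (by rintro ⟨ha, hb⟩; apply hαγ; rw [← e1, ha, hb, one_mul])
    rwa [e1] at h
  have R2 : gaussSum (β * μ) ψ * gaussSum μ⁻¹ ψ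
      = jacobiSum (β * μ) μ⁻¹ * Gc ψ β := by
    have e2 : (β * μ) * μ⁻¹ = β := by rw [mul_assoc, mul_inv_cancel, mul_one]
    have h := L5 ψ hψ (A := β * μ) (B := μ⁻¹)
      (by
        rintro ⟨ha, hb⟩
        rw [inv_eq_one] at hb
        exact h1 ⟨by rwa [hb, mul_one] at ha, hb⟩)
    rwa [e2] at h
  have R3 := L3 ψ hψ (γ * μ)
  have R4 := L3 ψ hψ μ
  have hs : (γ * μ) (-1 : κ) * μ (-1 : κ) = γ (-1 : κ) := by
    rw [MulChar.mul_apply, mul_assoc, sign_sq, mul_one]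
  have hu := sign_sq γ
  set q : ℂ := (Fintype.card κ : ℂ) with hq
  have key : gaussSum (α * μ) ψ * gaussSum (β * μ) ψ * (γ (-1 : κ) * q ^ 2)
      = jacobiSum (α * μ) ((γ * μ)⁻¹) * jacobiSum (β * μ) μ⁻¹ *
        Gc ψ (α * γ⁻¹) * Gc ψ β * Gc ψ (γ * μ) * Gc ψ μ := by
    have R12 : gaussSum (α * μ) ψ * gaussSum (β * μ) ψ * gaussSum ((γ * μ)⁻¹) ψ *
        gaussSum μ⁻¹ ψ
        = jacobiSum (α * μ) ((γ * μ)⁻¹) * jacobiSum (β * μ) μ⁻¹ *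
          Gc ψ (α * γ⁻¹) * Gc ψ β := by
      linear_combination (gaussSum (β * μ) ψ * gaussSum μ⁻¹ ψ) * R1 +
        (jacobiSum (α * μ) ((γ * μ)⁻¹) * Gc ψ (α * γ⁻¹)) * R2
    linear_combination (Gc ψ (γ * μ) * Gc ψ μ) * R12 -
      (gaussSum (α * μ) ψ * gaussSum (β * μ) ψ * gaussSum μ⁻¹ ψ * Gc ψ μ) * R3 -
      (gaussSum (α * μ) ψ * gaussSum (β * μ) ψ * ((γ * μ) (-1 : κ)) * q) * R4 -
      (gaussSum (α * μ) ψ * gaussSum (β * μ) ψ * q ^ 2) * hs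
  rw [poch_eq, poch_eq, pochc_eq, pochc_eq, one_mul]
  set J1 := jacobiSum (α * μ) ((γ * μ)⁻¹) with hJ1
  set J2 := jacobiSum (β * μ) μ⁻¹ with hJ2
  set P := Gc ψ (α * γ⁻¹) with hP
  set a := gaussSum (α * μ) ψ with ha
  set b := gaussSum (β * μ) ψ with hb
  set R := Gc ψ (γ * μ) with hR
  set S := Gc ψ μ with hS
  set u := γ (-1 : κ) with huu
  have n1 := gauss_ne ψ hψ α
  have n2 := gauss_ne ψ hψ β
  have n3 : R ≠ 0 := Gc_ne ψ hψ (γ * μ)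
  have n4 : S ≠ 0 := Gc_ne ψ hψ μ
  have n5 := Gc_ne ψ hψ γ
  have n6 := Gc_ne ψ hψ 1
  have n7 : q ≠ 0 := qne
  field_simp
  linear_combination u * key - a * b * q ^ 2 * hu


end VdM

open VdM in
theorem stmt {κ : Type*} [Field κ] [Fintype κ] [DecidableEq κ]
    (ψ : AddChar κ ℂ) (hψ : ψ ≠ 1) (α γ ν : MulChar κ ℂ)
    (hα : α ≠ 1) (hαγ : α ≠ γ) :
    F21 ψ α ν⁻¹ γ 1 = poch ψ (α⁻¹ * γ) ν / pochc ψ γ ν := by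
  classical
  have hαγ' : α * γ⁻¹ ≠ 1 := by rwa [ne_eq, mul_inv_eq_one]
  have hq1 : (1 : ℂ) - (Fintype.card κ : ℂ) ≠ 0 := by
    have h2 : 1 < Fintype.card κ := Fintype.one_lt_card
    intro h
    rw [sub_eq_zero] at h
    have : ((1 : ℕ) : ℂ) = ((Fintype.card κ : ℕ) : ℂ) := by exact_mod_cast h
    have := Nat.cast_injective (R := ℂ) this
    omega
  by_cases hν : ν = 1
  · subst hν
    have rh1 : poch ψ (α⁻¹ * γ) 1 = 1 := by
      rw [poch_eq, mul_one, div_self (gauss_ne ψ hψ _)]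
    have rh2 : pochc ψ γ 1 = 1 := by
      rw [pochc_eq, mul_one, div_self (Gc_ne ψ hψ γ)]
    have t1 : poch ψ α 1 = 1 := by
      rw [poch_eq, mul_one, div_self (gauss_ne ψ hψ _)]
    have t0 : poch ψ 1 1 = 1 := by
      rw [poch_eq, mul_one, div_self (gauss_ne ψ hψ _)]
    have t2 : pochc ψ 1 1 = 1 := by
      rw [pochc_eq, mul_one, div_self (Gc_ne ψ hψ _)]
    rw [inv_one, rh1, rh2, F21]
    simp only [map_one, mul_one]
    rw [Finset.sum_eq_sum_sdiff_singleton_add (Finset.mem_univ (1 : MulChar κ ℂ))]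
    rw [t1, t0, rh2, t2]
    rw [Finset.sum_congr rfl (fun μ hμ =>
      termwise ψ hψ α 1 γ μ hαγ'
        (fun h => (Finset.mem_sdiff.mp hμ).2 (Finset.mem_singleton.mpr h.2)))]
    rw [← Finset.mul_sum]
    have hsplit : ∑ μ ∈ Finset.univ \ {(1 : MulChar κ ℂ)},
        jacobiSum (α * μ) ((γ * μ)⁻¹) * jacobiSum ((1 : MulChar κ ℂ) * μ) μ⁻¹
        = (∑ μ : MulChar κ ℂ, jacobiSum (α * μ) ((γ * μ)⁻¹) *
            jacobiSum ((1 : MulChar κ ℂ) * μ) μ⁻¹) -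
          jacobiSum (α * 1) ((γ * 1)⁻¹) * jacobiSum ((1 : MulChar κ ℂ) * 1) (1 : MulChar κ ℂ)⁻¹ :=
      eq_sub_of_add_eq (Finset.sum_eq_sum_sdiff_singleton_add
        (Finset.mem_univ (1 : MulChar κ ℂ)) _).symm
    rw [hsplit, Wsum α 1 γ]
    rw [mul_one, mul_one, one_mul, inv_one, mul_one, jacobiSum_one_one]
    have F1' : gaussSum α ψ * gaussSum γ⁻¹ ψ = jacobiSum α γ⁻¹ * Gc ψ (α * γ⁻¹) :=
      L5 ψ hψ (fun h => hα h.1)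
    have Lg := L3 ψ hψ γ
    have hγ2 := sign_sq γ
    rw [Gc_one ψ hψ, G1 ψ hψ]
    set q : ℂ := (Fintype.card κ : ℂ) with hqdef
    set J := jacobiSum α γ⁻¹ with hJ
    set P := Gc ψ (α * γ⁻¹) with hP
    set Y := Gc ψ γ with hY
    set Gg := gaussSum γ⁻¹ ψ with hGg
    set GA := gaussSum α ψ with hGA
    set sg := γ (-1 : κ) with hsg
    have n1 : GA ≠ 0 := gauss_ne ψ hψ α
    have n5 : Y ≠ 0 := Gc_ne ψ hψ γ
    have n7 : q ≠ 0 := qne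
    have main2 : sg * Y * (J * P) = q * GA := by
      linear_combination (-(sg * Y)) * F1' + (sg * GA) * Lg + (q * GA) * hγ2
    field_simp
    linear_combination (-1 : ℂ) * main2
  · have hβ : ν⁻¹ ≠ 1 := by rwa [ne_eq, inv_eq_one]
    rw [F21]
    simp only [map_one, mul_one]
    rw [Finset.sum_congr rfl (fun μ _ =>
      termwise ψ hψ α ν⁻¹ γ μ hαγ' (fun h => hβ h.1)), ← Finset.mul_sum, Wsum α ν⁻¹ γ]
    rw [poch_eq, pochc_eq]
    have F1 : gaussSum α ψ * gaussSum (γ⁻¹ * ν⁻¹) ψ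
        = jacobiSum α (γ⁻¹ * ν⁻¹) * Gc ψ (α * (γ⁻¹ * ν⁻¹)) :=
      L5 ψ hψ (fun h => hα h.1)
    have F2 := L3 ψ hψ (α * (γ⁻¹ * ν⁻¹))
    rw [show (α * (γ⁻¹ * ν⁻¹))⁻¹ = α⁻¹ * γ * ν by
      rw [mul_inv, mul_inv, inv_inv, inv_inv, ← mul_assoc]] at F2
    have F3 := L3 ψ hψ (γ * ν)
    rw [show (γ * ν)⁻¹ = γ⁻¹ * ν⁻¹ from mul_inv γ ν] at F3
    have F4 := L3 ψ hψ (α * γ⁻¹)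
    rw [show (α * γ⁻¹)⁻¹ = α⁻¹ * γ by rw [mul_inv, inv_inv]] at F4
    simp only [MulChar.mul_apply, VdM.inv_neg_one] at F2 F3 F4
    have key2 : jacobiSum α (γ⁻¹ * ν⁻¹) * α (-1 : κ) * Gc ψ (γ * ν)
        = gaussSum α ψ * gaussSum (α⁻¹ * γ * ν) ψ := by
      have hne : γ (-1 : κ) * ν (-1 : κ) * (Fintype.card κ : ℂ) ≠ 0 :=
        mul_ne_zero (mul_ne_zero (sign_ne γ) (sign_ne ν)) qne
      apply mul_right_cancel₀ hne
      linear_combination (-(Gc ψ (γ * ν) * gaussSum (α⁻¹ * γ * ν) ψ)) * F1 -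
        (jacobiSum α (γ⁻¹ * ν⁻¹) * Gc ψ (γ * ν)) * F2 +
        (gaussSum α ψ * gaussSum (α⁻¹ * γ * ν) ψ) * F3
    rw [Gc_of_ne ψ hβ, Gc_one ψ hψ]
    have hγ2 := sign_sq γ
    have hα2 := sign_sq α
    set q : ℂ := (Fintype.card κ : ℂ) with hqdef
    set J := jacobiSum α (γ⁻¹ * ν⁻¹) with hJ
    set P := Gc ψ (α * γ⁻¹) with hP
    set Gb := gaussSum ν⁻¹ ψ with hGb
    set X := Gc ψ (γ * ν) with hX
    set Y := Gc ψ γ with hY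
    set Ga := gaussSum (α⁻¹ * γ) ψ with hGa
    set Gm := gaussSum (α⁻¹ * γ * ν) ψ with hGm
    set GA := gaussSum α ψ with hGA
    set sa := α (-1 : κ) with hsa
    set sg := γ (-1 : κ) with hsg
    have n1 : GA ≠ 0 := gauss_ne ψ hψ α
    have n2 : Gb ≠ 0 := gauss_ne ψ hψ ν⁻¹
    have n3 : Ga ≠ 0 := gauss_ne ψ hψ (α⁻¹ * γ)
    have n4 : X ≠ 0 := Gc_ne ψ hψ (γ * ν)
    have n5 : Y ≠ 0 := Gc_ne ψ hψ γ
    have n7 : q ≠ 0 := qne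
    have n8 : sa ≠ 0 := sign_ne α
    rw [collapse hq1]
    have main : sg * P * Y * J * (Ga * X) = Gm * Y * (q * GA) := by
      linear_combination (Y * J * X * sg) * F4 + (Y * J * X * sa * q) * hγ2 +
        (Y * q) * key2
    field_simp
    apply mul_right_cancel₀ n5
    linear_combination main
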